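/- arXiv:2004.07191 — 3 statements merged into one kernel-verified Lean document; each statement's English description precedes it below -/
import Mathlib

section
/- For a non-degenerate probability measure ν on ℝ with support bounded from above, the map θ ↦ k_ν(θ) = (M_ν(θ) − 1)/(θ M_ν(θ)), where M_ν(θ) = ∫ 1/(1−θx) dν(x), is strictly increasing on (0, θ₊). -/
open MeasureTheory Set Filter Topology ENNReal

noncomputable section

/-- Cauchy-Stieltjes moment-type transform `M_ν(θ) = ∫ 1/(1-θx) dν(x)`. -/
def Mcs (ν : Measure ℝ) (θ : ℝ) : ℝ := ∫ x, 1 / (1 - θ * x) ∂ν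

/-- The mean map `k_ν(θ) = (M_ν(θ) - 1)/(θ M_ν(θ))`. -/
def kcs (ν : Measure ℝ) (θ : ℝ) : ℝ := (Mcs ν θ - 1) / (θ * Mcs ν θ)

/-- The Cauchy transform `G_ν(z) = ∫ 1/(z-x) dν(x)`. -/
def Gcs (ν : Measure ℝ) (z : ℝ) : ℝ := ∫ x, 1 / (z - x) ∂ν

/-- `Ψ_ν(z) = ∫ zx/(1-zx) dν(x)`. -/
def PsiT (ν : Measure ℝ) (z : ℝ) : ℝ := ∫ x, z * x / (1 - z * x) ∂ν

/-- Topological support of a measure on ℝ. -/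
def msupp (ν : Measure ℝ) : Set ℝ := {x | ∀ U ∈ 𝓝 x, ν U ≠ 0}

/-- The natural parameter domain `(θ₋, θ₊) \ {0}`: nonzero `θ` with `θ x < 1` on the support. -/
def ΘDom (ν : Measure ℝ) : Set ℝ := {θ | θ ≠ 0 ∧ ∀ x ∈ msupp ν, θ * x < 1}

/-- Right-sided parameter domain `(0, θ₊)`. -/
def ΘPlus (ν : Measure ℝ) : Set ℝ := {θ | 0 < θ ∧ ∀ x ∈ msupp ν, θ * x < 1}

/-- `ψ_ν`, the inverse of the mean map `k_ν` on the parameter domain. -/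
def ψcs (ν : Measure ℝ) : ℝ → ℝ := Function.invFunOn (kcs ν) (ΘDom ν)

/-- `ψ_ν` for the right-sided family. -/
def ψplus (ν : Measure ℝ) : ℝ → ℝ := Function.invFunOn (kcs ν) (ΘPlus ν)

/-- `ψ_ν` for the left-sided family (measures on `[0,∞)`, parameter `θ < 0`). -/
def ψminus (ν : Measure ℝ) : ℝ → ℝ := Function.invFunOn (kcs ν) (Iio 0)

/-- The pseudo-variance function `𝕍_ν(m) = m (1/ψ_ν(m) - m)`. -/
def pseudoVar (ν : Measure ℝ) (m : ℝ) : ℝ := m * (1 / ψcs ν m - m)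

def pseudoVarMinus (ν : Measure ℝ) (m : ℝ) : ℝ := m * (1 / ψminus ν m - m)

/-- The tilted measure `P_{θ,ν}(dx) = ν(dx)/(M_ν(θ)(1-θx))`. -/
def tilt (ν : Measure ℝ) (θ : ℝ) : Measure ℝ :=
  ν.withDensity (fun x => ENNReal.ofReal (1 / (Mcs ν θ * (1 - θ * x))))

/-- `Q_{m,ν}`, the element of the CSK family with mean `m`. -/
def Qcsk (ν : Measure ℝ) (m : ℝ) : Measure ℝ := tilt ν (ψcs ν m)

def QcskMinus (ν : Measure ℝ) (m : ℝ) : Measure ℝ := tilt ν (ψminus ν m)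

/-- The variance function `V_ν(m) = ∫ (x-m)² dQ_{m,ν}(x)`. -/
def varFun (ν : Measure ℝ) (m : ℝ) : ℝ := ∫ x, (x - m) ^ 2 ∂(Qcsk ν m)

def varFunMinus (ν : Measure ℝ) (m : ℝ) : ℝ := ∫ x, (x - m) ^ 2 ∂(QcskMinus ν m)

/-- Domain of means (two-sided). -/
def meanDom (ν : Measure ℝ) : Set ℝ := kcs ν '' ΘDom ν

/-- Right-sided domain of means `(m₀(ν), m₊(ν))`. -/
def meanDomPlus (ν : Measure ℝ) : Set ℝ := kcs ν '' ΘPlus ν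

/-- Left-sided domain of means `(m₋(ν), m₀(ν))`. -/
def meanDomMinus (ν : Measure ℝ) : Set ℝ := kcs ν '' Iio 0

/-- `χ_ν`, the inverse of `Ψ_ν` on negative reals. -/
def χT (ν : Measure ℝ) : ℝ → ℝ := Function.invFunOn (PsiT ν) (Iio 0)

/-- The S-transform `S_ν(z) = χ_ν(z)(1+z)/z`. -/
def Stransf (ν : Measure ℝ) (z : ℝ) : ℝ := χT ν z * (1 + z) / z

/-- `m₋(ν) = -1/G_ν(0)` for a measure on `[0,∞)`. -/
def mMinus (ν : Measure ℝ) : ℝ := -(Gcs ν 0)⁻¹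

/-- The self-energy (K-transform) `K_ν(z) = z - 1/G_ν(z)`. -/
def KT (ν : Measure ℝ) (z : ℝ) : ℝ := z - 1 / Gcs ν z

/-- A measure is non-degenerate if it is not a Dirac mass. -/
def Nondeg (ν : Measure ℝ) : Prop := ∀ c : ℝ, ν ≠ Measure.dirac c
def pseudoVarPlus (ν : Measure ℝ) (m : ℝ) : ℝ := m * (1 / ψplus ν m - m)

def QcskPlus (ν : Measure ℝ) (m : ℝ) : Measure ℝ := tilt ν (ψplus ν m)

def varFunPlus (ν : Measure ℝ) (m : ℝ) : ℝ := ∫ x, (x - m) ^ 2 ∂(QcskPlus ν m)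

/-- The mean of a measure on `[0,∞)`, as an extended nonnegative real. -/
def m0E (ν : Measure ℝ) : ℝ≥0∞ := ∫⁻ x, ENNReal.ofReal x ∂ν

/-- The Σ-transform `Σ_ν(z) = S_ν(z/(1-z))`. -/
def SigmaT (ν : Measure ℝ) (z : ℝ) : ℝ := Stransf ν (z / (1 - z))

/-- The free Poisson (Marchenko–Pastur) law with density `(1/2π)√((4-x)/x)` on `(0,4)`. -/
def freePoisson : Measure ℝ :=
  volume.withDensity (fun x => ENNReal.ofReal
    (Set.indicator (Ioo 0 4) (fun y => (1/(2*Real.pi)) * Real.sqrt ((4 - y)/y)) x))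

/-! With `z = 1/θ` one has `M_ν(θ) = z G_ν(z)`, so `k_ν(θ) = z - 1/G_ν(z) = K_ν(z)` and it suffices
that `K_ν` decreases strictly to the right of the support. For `z₂ < z₁` there, the resolvent
identity `G(z₂) - G(z₁) = (z₁ - z₂) ∫ dν(x) / ((z₁ - x)(z₂ - x))` turns `K(z₁) < K(z₂)` into
`G(z₁) G(z₂) < ∫ dν(x) / ((z₁ - x)(z₂ - x))`: Chebyshev's correlation inequality for the two
increasing functions `x ↦ 1/(zᵢ - x)`, obtained by integrating
`(f x - f y)(g x - g y) ≥ 0` against `ν ⊗ ν`. It is strict because a measure that is not a Dirac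
mass gives `ν ⊗ ν` positive mass off the diagonal. -/

namespace MeasureTheory

section Chebyshev

variable {α : Type*} [MeasurableSpace α] {μ : Measure α} [IsProbabilityMeasure μ]

lemma Measure.eq_dirac_of_ae_eq [MeasurableSingletonClass α] {a : α} (h : ∀ᵐ x ∂μ, x = a) :
    μ = Measure.dirac a := by
  have hs : ∀ᵐ x ∂μ, x ∈ ({a} : Finset α) := by simpa using h
  rw [Measure.ae_mem_finset_iff] at hs
  have ha : μ {a} = 1 := (prob_compl_eq_zero_iff (measurableSet_singleton a)).1 (ae_iff.1 h)
  simpa [ha] using hs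

lemma Measure.prod_compl_diagonal_ne_zero [MeasurableEq α] (hμ : ∀ a, μ ≠ Measure.dirac a) :
    μ.prod μ (diagonal α)ᶜ ≠ 0 := by
  intro h
  rw [Measure.measure_prod_null measurableSet_diagonal.compl] at h
  obtain ⟨a, ha⟩ := h.exists
  have ha : μ (Prod.mk a ⁻¹' (diagonal α)ᶜ) = 0 := ha
  refine hμ a (Measure.eq_dirac_of_ae_eq ?_)
  rw [ae_iff]
  convert ha using 2
  ext x
  simp [eq_comm]

lemma integrable_prod_sub_mul_sub {f g : α → ℝ} (hf : Integrable f μ) (hg : Integrable g μ)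
    (hfg : Integrable (f * g) μ) :
    Integrable (fun p : α × α ↦ (f p.1 - f p.2) * (g p.1 - g p.2)) (μ.prod μ) := by
  refine (((hfg.comp_fst μ).add (hfg.comp_snd μ)).sub
    ((hf.mul_prod hg).add (hg.mul_prod hf))).congr (ae_of_all _ fun p ↦ ?_)
  simp only [Pi.add_apply, Pi.sub_apply, Pi.mul_apply]
  ring

lemma integral_prod_sub_mul_sub {f g : α → ℝ} (hf : Integrable f μ) (hg : Integrable g μ)
    (hfg : Integrable (f * g) μ) :
    ∫ p, (f p.1 - f p.2) * (g p.1 - g p.2) ∂μ.prod μ =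
      2 * (∫ x, f x * g x ∂μ - (∫ x, f x ∂μ) * ∫ x, g x ∂μ) := by
  have expand : (fun p : α × α ↦ (f p.1 - f p.2) * (g p.1 - g p.2)) =
      fun p ↦ ((f * g) p.1 + (f * g) p.2) - (f p.1 * g p.2 + g p.1 * f p.2) := by
    ext p
    simp only [Pi.mul_apply]
    ring
  rw [expand, integral_sub, integral_add (hfg.comp_fst μ) (hfg.comp_snd μ),
    integral_add (hf.mul_prod hg) (hg.mul_prod hf), integral_fun_fst (f * g),
    integral_fun_snd (f * g), integral_prod_mul, integral_prod_mul]
  · simp only [probReal_univ, one_smul, Pi.mul_apply]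
    ring
  exacts [(hfg.comp_fst μ).add (hfg.comp_snd μ), (hf.mul_prod hg).add (hg.mul_prod hf)]

theorem integral_mul_integral_lt_integral_mul [LinearOrder α] [MeasurableEq α]
    (hμ : ∀ a, μ ≠ Measure.dirac a) {s : Set α} (hs : ∀ᵐ x ∂μ, x ∈ s) {f g : α → ℝ}
    (hf : StrictMonoOn f s) (hg : StrictMonoOn g s) (hfi : Integrable f μ)
    (hgi : Integrable g μ) (hfgi : Integrable (f * g) μ) :
    (∫ x, f x ∂μ) * ∫ x, g x ∂μ < ∫ x, f x * g x ∂μ := by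
  set H : α × α → ℝ := fun p ↦ (f p.1 - f p.2) * (g p.1 - g p.2) with hH
  have hss : ∀ᵐ p ∂μ.prod μ, p ∈ s ×ˢ s :=
    (Measure.quasiMeasurePreserving_fst.ae hs).and (Measure.quasiMeasurePreserving_snd.ae hs)
  have hpos : ∀ p ∈ s ×ˢ s, p.1 ≠ p.2 → 0 < H p := by
    rintro ⟨x, y⟩ ⟨hx, hy⟩ hxy
    rcases hxy.lt_or_gt with h | h
    · exact mul_pos_of_neg_of_neg (sub_neg.2 (hf hx hy h)) (sub_neg.2 (hg hx hy h))
    · exact mul_pos (sub_pos.2 (hf hy hx h)) (sub_pos.2 (hg hy hx h))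
  have hnonneg : 0 ≤ᵐ[μ.prod μ] H := by
    filter_upwards [hss] with p hp
    rcases eq_or_ne p.1 p.2 with h | h
    · simp [H, h]
    · exact (hpos p hp h).le
  have hsupp : (diagonal α)ᶜ ∩ s ×ˢ s ⊆ Function.support H :=
    fun p ⟨hne, hp⟩ ↦ (hpos p hp hne).ne'
  have hHpos : 0 < ∫ p, H p ∂μ.prod μ := by
    rw [integral_pos_iff_support_of_nonneg_ae hnonneg (integrable_prod_sub_mul_sub hfi hgi hfgi)]
    calc 0 < μ.prod μ (diagonal α)ᶜ := pos_iff_ne_zero.2 (Measure.prod_compl_diagonal_ne_zero hμ)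
      _ = μ.prod μ ((diagonal α)ᶜ ∩ s ×ˢ s) := (measure_inter_conull hss).symm
      _ ≤ μ.prod μ (Function.support H) := measure_mono hsupp
  rw [hH, integral_prod_sub_mul_sub hfi hgi hfgi] at hHpos
  linarith

end Chebyshev

end MeasureTheory

section CauchyTransform

variable {ν : Measure ℝ} {A z : ℝ}

lemma integrable_one_div_sub [IsFiniteMeasure ν] (hA : ∀ᵐ x ∂ν, x ≤ A) (hz : A < z) :
    Integrable (fun x ↦ 1 / (z - x)) ν := by
  have hmeas : Measurable fun x ↦ 1 / (z - x) := by fun_prop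
  refine Integrable.of_bound hmeas.aestronglyMeasurable (1 / (z - A)) ?_
  filter_upwards [hA] with x hx
  rw [Real.norm_eq_abs, abs_of_pos (one_div_pos.2 (by linarith))]
  exact one_div_le_one_div_of_le (sub_pos.2 hz) (by linarith)

lemma strictMonoOn_one_div_sub (hz : A < z) : StrictMonoOn (fun x ↦ 1 / (z - x)) (Iic A) :=
  fun _ _ y hy hxy ↦ one_div_lt_one_div_of_lt (by linarith [mem_Iic.1 hy]) (by linarith)

lemma Gcs_pos [IsFiniteMeasure ν] [NeZero ν] (hA : ∀ᵐ x ∂ν, x ≤ A) (hz : A < z) :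
    0 < Gcs ν z := by
  have hpos : ∀ᵐ x ∂ν, 0 < 1 / (z - x) := by
    filter_upwards [hA] with x hx
    exact one_div_pos.2 (by linarith)
  rw [Gcs, integral_pos_iff_support_of_nonneg_ae (hpos.mono fun _ hx ↦ hx.le)
    (integrable_one_div_sub hA hz)]
  calc 0 < ν univ := Measure.measure_univ_pos.2 (NeZero.ne ν)
    _ ≤ ν (Function.support fun x ↦ 1 / (z - x)) :=
      measure_mono_ae (hpos.mono fun _ hx _ ↦ hx.ne')

theorem KT_strictAntiOn [IsProbabilityMeasure ν] (hA : ∀ᵐ x ∂ν, x ≤ A)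
    (hν : ∀ a, ν ≠ Measure.dirac a) : StrictAntiOn (KT ν) (Ioi A) := by
  intro z₂ hz₂ z₁ hz₁ h21
  set f : ℝ → ℝ := fun x ↦ 1 / (z₁ - x)
  set g : ℝ → ℝ := fun x ↦ 1 / (z₂ - x)
  have resolvent : ∀ᵐ x ∂ν, (f * g) x = (g x - f x) / (z₁ - z₂) := by
    filter_upwards [hA] with x hx
    have h₁ : z₁ - x ≠ 0 := by linarith [mem_Ioi.1 hz₁]
    have h₂ : z₂ - x ≠ 0 := by linarith [mem_Ioi.1 hz₂]
    have h₁₂ : z₁ - z₂ ≠ 0 := by linarith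
    simp only [f, g, Pi.mul_apply]
    field_simp
    ring
  have hfi : Integrable f ν := integrable_one_div_sub hA hz₁
  have hgi : Integrable g ν := integrable_one_div_sub hA hz₂
  have hfgi : Integrable (f * g) ν :=
    ((hgi.sub hfi).div_const _).congr (resolvent.mono fun _ hx ↦ hx.symm)
  have hI : ∫ x, f x * g x ∂ν = (Gcs ν z₂ - Gcs ν z₁) / (z₁ - z₂) := by
    rw [Gcs, Gcs, ← integral_sub hgi hfi, ← integral_div]
    exact integral_congr_ae resolvent
  have hcheb : Gcs ν z₁ * Gcs ν z₂ < (Gcs ν z₂ - Gcs ν z₁) / (z₁ - z₂) :=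
    hI ▸ integral_mul_integral_lt_integral_mul hν hA (strictMonoOn_one_div_sub hz₁)
      (strictMonoOn_one_div_sub hz₂) hfi hgi hfgi
  rw [lt_div_iff₀ (sub_pos.2 h21)] at hcheb
  have hG₁ := Gcs_pos hA hz₁
  have hG₂ := Gcs_pos hA hz₂
  have hrecip : z₁ - z₂ < 1 / Gcs ν z₁ - 1 / Gcs ν z₂ := by
    rw [div_sub_div _ _ hG₁.ne' hG₂.ne', lt_div_iff₀ (mul_pos hG₁ hG₂)]
    linarith
  simp only [KT]
  linarith

end CauchyTransform

lemma msupp_eq_support (ν : Measure ℝ) : msupp ν = ν.support := by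
  ext x
  simp [msupp, Measure.mem_support_iff_forall, pos_iff_ne_zero]

lemma ae_le_sSup_msupp {ν : Measure ℝ} (hbd : BddAbove (msupp ν)) :
    ∀ᵐ x ∂ν, x ≤ sSup (msupp ν) := by
  filter_upwards [Measure.support_mem_ae] with x hx
  exact le_csSup hbd ((msupp_eq_support ν).symm ▸ hx)

lemma sSup_msupp_lt_inv {ν : Measure ℝ} [NeZero ν] (hbd : BddAbove (msupp ν)) {θ : ℝ}
    (hθ : θ ∈ ΘPlus ν) : sSup (msupp ν) < θ⁻¹ := by
  have hmem : sSup (msupp ν) ∈ msupp ν := by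
    rw [msupp_eq_support] at hbd ⊢
    exact Measure.isClosed_support.csSup_mem (Measure.nonempty_support (NeZero.ne ν)) hbd
  rw [← one_div, lt_div_iff₀' hθ.1]
  exact hθ.2 _ hmem

lemma Mcs_eq_inv_mul_Gcs_inv (ν : Measure ℝ) {θ : ℝ} (hθ : θ ≠ 0) :
    Mcs ν θ = θ⁻¹ * Gcs ν θ⁻¹ := by
  rw [Mcs, Gcs, ← integral_const_mul]
  congr 1 with x
  rw [show 1 - θ * x = θ * (θ⁻¹ - x) by field_simp, one_div, mul_inv, one_div]

lemma kcs_eq_KT_inv (ν : Measure ℝ) {θ : ℝ} (hθ : θ ≠ 0) (hG : Gcs ν θ⁻¹ ≠ 0) :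
    kcs ν θ = KT ν θ⁻¹ := by
  rw [kcs, KT, Mcs_eq_inv_mul_Gcs_inv ν hθ, mul_inv_cancel_left₀ hθ, sub_div, mul_div_assoc,
    div_self hG, mul_one]

/-- the mean map `k_ν` is strictly increasing on `(0, θ₊)`. -/
theorem mean_map_strictMonoOn (ν : Measure ℝ) [IsProbabilityMeasure ν]
    (hnd : Nondeg ν) (hbd : BddAbove (msupp ν)) :
    StrictMonoOn (kcs ν) (ΘPlus ν) := by
  have hA := ae_le_sSup_msupp hbd
  have hkcs : ∀ θ ∈ ΘPlus ν, kcs ν θ = KT ν θ⁻¹ := fun θ hθ ↦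
    kcs_eq_KT_inv ν hθ.1.ne' (Gcs_pos hA (sSup_msupp_lt_inv hbd hθ)).ne'
  intro θ₁ h₁ θ₂ h₂ h12
  rw [hkcs θ₁ h₁, hkcs θ₂ h₂]
  exact KT_strictAntiOn hA hnd (sSup_msupp_lt_inv hbd h₂) (sSup_msupp_lt_inv hbd h₁)
    (inv_strictAnti₀ h₁.1 h12)
end
end

section
/- For ν a probability measure on [0,∞) with ν({0}) = δ < 1 and Ψ_ν(z) = ∫ zx/(1−zx) dν(x), if m lies in the left-sided domain of means (m₋(ν), m₀(ν)) and z̃ = ψ_ν(m) = 1/(m + V_ν(m)/m), then Ψ_ν(z̃) = m²/V_ν(m); moreover δ − 1 < m²/V_ν(m) < 0 for all such m. -/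
open MeasureTheory Set Filter Topology ENNReal

noncomputable section

/-! For `z < 0` and `x ≥ 0` we have `0 < 1/(1 - zx) ≤ 1`, with equality exactly at `x = 0`, so
`M := M_ν(z)` satisfies `ν{0} < M < 1` as soon as `ν` charges `(0, ∞)`. Since
`zx/(1 - zx) = 1/(1 - zx) - 1`, `Ψ_ν(z) = M - 1`. On the other hand `m = k_ν(z) = (M - 1)/(zM)`
gives `1/z - m = 1/(zM)`, hence `V_ν(m) = m/(zM)`, `m + V_ν(m)/m = 1/z` and `m²/V_ν(m) = mzM = M - 1`. -/

lemma integral_lt_integral_of_ae_le_of_lt_on {α : Type*} [MeasurableSpace α] {μ : Measure α}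
    {f g : α → ℝ} {s : Set α} (hf : Integrable f μ) (hg : Integrable g μ) (hle : f ≤ᵐ[μ] g)
    (hlt : ∀ x ∈ s, f x < g x) (hs : 0 < μ s) :
    ∫ x, f x ∂μ < ∫ x, g x ∂μ := by
  have hpos : 0 < ∫ x, (g x - f x) ∂μ := by
    rw [integral_pos_iff_support_of_nonneg_ae (hle.mono fun x hx => sub_nonneg.2 hx) (hg.sub hf)]
    exact hs.trans_le (measure_mono fun x hx => sub_ne_zero.2 (hlt x hx).ne')
  rw [integral_sub hg hf] at hpos
  linarith

lemma measure_Ioi_zero_pos {ν : Measure ℝ} [IsProbabilityMeasure ν] (hpos : ν (Iio 0) = 0)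
    (hatom : ν {0} < 1) : 0 < ν (Ioi 0) := by
  refine pos_iff_ne_zero.2 fun hIoi => hatom.ne ?_
  have hcompl : ν {0}ᶜ = 0 := by
    rw [← Iio_union_Ioi]
    exact measure_union_null hpos hIoi
  rwa [prob_compl_eq_zero_iff (measurableSet_singleton 0)] at hcompl

section NonnegSupport

variable {ν : Measure ℝ} {θ : ℝ}

lemma ae_nonneg_of_measure_Iio_zero (hpos : ν (Iio 0) = 0) : ∀ᵐ x ∂ν, 0 ≤ x := by
  rw [ae_iff]
  simp only [not_le]
  exact hpos

lemma one_div_one_sub_mul_mem_Ioc {x : ℝ} (hθ : θ ≤ 0) (hx : 0 ≤ x) :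
    1 / (1 - θ * x) ∈ Ioc 0 1 := by
  have h1 : 1 ≤ 1 - θ * x := by nlinarith
  exact ⟨by positivity, by rw [div_le_one (by linarith)]; exact h1⟩

lemma one_div_one_sub_mul_lt_one {x : ℝ} (hθ : θ < 0) (hx : 0 < x) : 1 / (1 - θ * x) < 1 := by
  have h1 : 1 < 1 - θ * x := by nlinarith
  rw [div_lt_one (by linarith)]
  exact h1

lemma integrable_one_div_one_sub_mul [IsFiniteMeasure ν] (hpos : ν (Iio 0) = 0) (hθ : θ ≤ 0) :
    Integrable (fun x => 1 / (1 - θ * x)) ν := by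
  refine (integrable_const (1 : ℝ)).mono'
    (by fun_prop : Measurable fun x : ℝ => 1 / (1 - θ * x)).aestronglyMeasurable ?_
  filter_upwards [ae_nonneg_of_measure_Iio_zero hpos] with x hx
  obtain ⟨h0, h1⟩ := one_div_one_sub_mul_mem_Ioc hθ hx
  rwa [Real.norm_eq_abs, abs_of_pos h0]

variable [IsProbabilityMeasure ν] (hpos : ν (Iio 0) = 0)
include hpos

lemma PsiT_eq_Mcs_sub_one (hθ : θ ≤ 0) : PsiT ν θ = Mcs ν θ - 1 := by
  have hrw : (fun x => θ * x / (1 - θ * x)) =ᵐ[ν] fun x => 1 / (1 - θ * x) - 1 := by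
    filter_upwards [ae_nonneg_of_measure_Iio_zero hpos] with x hx
    have : 1 - θ * x ≠ 0 := by nlinarith
    field_simp
    ring
  rw [PsiT, integral_congr_ae hrw, integral_sub (integrable_one_div_one_sub_mul hpos hθ)
    (integrable_const 1), integral_const, Mcs]
  simp

lemma Mcs_lt_one (hatom : ν {0} < 1) (hθ : θ < 0) : Mcs ν θ < 1 := by
  have hlt := integral_lt_integral_of_ae_le_of_lt_on
    (integrable_one_div_one_sub_mul hpos hθ.le) (integrable_const 1)
    (by filter_upwards [ae_nonneg_of_measure_Iio_zero hpos] with x hx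
        exact (one_div_one_sub_mul_mem_Ioc hθ.le hx).2)
    (fun x hx => one_div_one_sub_mul_lt_one hθ hx) (measure_Ioi_zero_pos hpos hatom)
  simpa [Mcs] using hlt

lemma toReal_measure_zero_lt_Mcs (hatom : ν {0} < 1) (hθ : θ < 0) :
    (ν {0}).toReal < Mcs ν θ := by
  have hlt := integral_lt_integral_of_ae_le_of_lt_on
    ((integrable_const (1 : ℝ)).indicator (measurableSet_singleton 0))
    (integrable_one_div_one_sub_mul hpos hθ.le)
    (by filter_upwards [ae_nonneg_of_measure_Iio_zero hpos] with x hx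
        rcases hx.eq_or_lt with rfl | hx
        · simp
        · rw [indicator_of_notMem (mem_singleton_iff.not.2 hx.ne')]
          exact (one_div_one_sub_mul_mem_Ioc hθ.le hx.le).1.le)
    (fun x (hx : 0 < x) => by
      rw [indicator_of_notMem (mem_singleton_iff.not.2 hx.ne')]
      exact (one_div_one_sub_mul_mem_Ioc hθ.le hx.le).1)
    (measure_Ioi_zero_pos hpos hatom)
  rwa [integral_indicator_const _ (measurableSet_singleton 0), smul_eq_mul, mul_one] at hlt

end NonnegSupport

lemma one_div_add_mul_sub_div_self {m : ℝ} (θ : ℝ) (hm : m ≠ 0) :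
    1 / (m + m * (1 / θ - m) / m) = θ := by
  rw [mul_div_cancel_left₀ _ hm, add_sub_cancel, one_div_one_div]

lemma sq_div_mul_one_div_sub_eq {θ M m : ℝ} (hθ : θ ≠ 0) (hM : M ≠ 0) (hm : m = (M - 1) / (θ * M)) :
    m ^ 2 / (m * (1 / θ - m)) = M - 1 := by
  subst hm
  field_simp
  ring

theorem Psi_pseudoVar_general (ν : Measure ℝ) [IsProbabilityMeasure ν]
    (hpos : ν (Iio 0) = 0) (hatom : ν {0} < 1) :
    ∀ m ∈ meanDomMinus ν,
      PsiT ν (1 / (m + pseudoVarMinus ν m / m)) = m ^ 2 / pseudoVarMinus ν m ∧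
      (ν {0}).toReal - 1 < m ^ 2 / pseudoVarMinus ν m ∧
      m ^ 2 / pseudoVarMinus ν m < 0 := by
  intro m hm
  obtain ⟨hz, hkz⟩ : ψminus ν m < 0 ∧ kcs ν (ψminus ν m) = m :=
    ⟨Function.invFunOn_mem hm, Function.invFunOn_eq hm⟩
  set z := ψminus ν m
  have hM1 := Mcs_lt_one hpos hatom hz
  have hδM := toReal_measure_zero_lt_Mcs hpos hatom hz
  have hM0 : Mcs ν z ≠ 0 := (ENNReal.toReal_nonneg.trans_lt hδM).ne'
  have hm0 : m ≠ 0 := by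
    rw [← hkz, kcs]
    exact div_ne_zero (sub_ne_zero.2 hM1.ne) (mul_ne_zero hz.ne hM0)
  rw [pseudoVarMinus, one_div_add_mul_sub_div_self z hm0,
    sq_div_mul_one_div_sub_eq hz.ne hM0 hkz.symm, PsiT_eq_Mcs_sub_one hpos hz.le]
  exact ⟨rfl, by linarith, by linarith⟩

/-- `Ψ_ν(ψ_ν(m)) = m²/𝕍_ν(m)` and `δ - 1 < m²/𝕍_ν(m) < 0` on `(m₋(ν), m₀(ν))`. -/
theorem Psi_pseudoVar (ν : Measure ℝ) [IsProbabilityMeasure ν]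
    (hnd : Nondeg ν) (hpos : ν (Iio 0) = 0) (hatom : ν {0} < 1) :
    ∀ m ∈ meanDomMinus ν,
      PsiT ν (1 / (m + pseudoVarMinus ν m / m)) = m ^ 2 / pseudoVarMinus ν m ∧
      (ν {0}).toReal - 1 < m ^ 2 / pseudoVarMinus ν m ∧
      m ^ 2 / pseudoVarMinus ν m < 0 :=
  Psi_pseudoVar_general ν hpos hatom
end
end

section
/- For ν a probability measure on [0,∞) with ν({0}) < 1, z·S_ν(z) → 0 as z → 0⁻ along (δ−1, 0). -/
open MeasureTheory Set Filter Topology ENNReal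

noncomputable section

/-! `χ_ν` inverts `Ψ_ν(θ) = ∫ θx/(1-θx) dν(x)` on `θ < 0`. For `ν` on `[0,∞)`, `Ψ_ν` is continuous
and nondecreasing on `(-∞,0]`, vanishes at `0`, is negative on `(-∞,0)` as soon as `ν(0,∞) > 0`, and
tends to `-ν(0,∞) = δ-1` at `-∞` by dominated convergence. By the intermediate value theorem every
`z ∈ (δ-1,0)` is some `Ψ_ν(θ)` with `θ < 0`, and monotonicity squeezes `χ_ν(z)` to `0` as `z → 0⁻`.
Finally `z S_ν(z) = (1+z) χ_ν(z)`. -/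

lemma abs_mul_div_one_sub_mul_le_one {θ x : ℝ} (hθ : θ ≤ 0) (hx : 0 ≤ x) :
    |θ * x / (1 - θ * x)| ≤ 1 := by
  have hθx : θ * x ≤ 0 := mul_nonpos_of_nonpos_of_nonneg hθ hx
  rw [abs_div, abs_of_nonpos hθx, abs_of_pos (by linarith), div_le_one (by linarith)]
  linarith

section PsiT

variable {ν : Measure ℝ}

lemma aestronglyMeasurable_PsiT_integrand (θ : ℝ) :
    AEStronglyMeasurable (fun x => θ * x / (1 - θ * x)) ν :=
  (by fun_prop : Measurable fun x : ℝ => θ * x / (1 - θ * x)).aestronglyMeasurable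

lemma integrable_PsiT_integrand [IsFiniteMeasure ν] (hν : ∀ᵐ x ∂ν, 0 ≤ x) {θ : ℝ}
    (hθ : θ ≤ 0) : Integrable (fun x => θ * x / (1 - θ * x)) ν :=
  Integrable.mono' (integrable_const 1) (aestronglyMeasurable_PsiT_integrand θ)
    (hν.mono fun _ hx => abs_mul_div_one_sub_mul_le_one hθ hx)

lemma monotoneOn_PsiT [IsFiniteMeasure ν] (hν : ∀ᵐ x ∂ν, 0 ≤ x) :
    MonotoneOn (PsiT ν) (Iic 0) := by
  intro θ₁ hθ₁ θ₂ hθ₂ h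
  refine integral_mono_ae (integrable_PsiT_integrand hν hθ₁) (integrable_PsiT_integrand hν hθ₂) ?_
  filter_upwards [hν] with x hx
  have h₁ : θ₁ * x ≤ 0 := mul_nonpos_of_nonpos_of_nonneg hθ₁ hx
  have h₂ : θ₂ * x ≤ 0 := mul_nonpos_of_nonpos_of_nonneg hθ₂ hx
  rw [div_le_div_iff₀ (by linarith) (by linarith)]
  nlinarith [mul_le_mul_of_nonneg_right h hx]

lemma continuousOn_PsiT [IsFiniteMeasure ν] (hν : ∀ᵐ x ∂ν, 0 ≤ x) :
    ContinuousOn (PsiT ν) (Iic 0) := by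
  refine continuousOn_of_dominated (bound := fun _ => 1)
    (fun θ _ => aestronglyMeasurable_PsiT_integrand θ)
    (fun θ hθ => hν.mono fun _ hx => abs_mul_div_one_sub_mul_le_one hθ hx) (integrable_const 1) ?_
  filter_upwards [hν] with x hx
  refine ContinuousOn.div (by fun_prop) (by fun_prop) fun θ hθ => ?_
  nlinarith [mul_nonpos_of_nonpos_of_nonneg (mem_Iic.mp hθ) hx]

@[simp] lemma PsiT_zero : PsiT ν 0 = 0 := by simp [PsiT]

lemma PsiT_neg [IsFiniteMeasure ν] (hν : ∀ᵐ x ∂ν, 0 ≤ x) (hν₀ : ν (Ioi 0) ≠ 0) {θ : ℝ}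
    (hθ : θ < 0) : PsiT ν θ < 0 := by
  have hpos : 0 < ∫ x, -(θ * x / (1 - θ * x)) ∂ν := by
    rw [integral_pos_iff_support_of_nonneg_ae]
    · refine (pos_iff_ne_zero.mpr hν₀).trans_le (measure_mono fun x (hx : 0 < x) => ?_)
      have : θ * x / (1 - θ * x) < 0 := div_neg_of_neg_of_pos (by nlinarith) (by nlinarith)
      simpa using this.ne
    · filter_upwards [hν] with x hx
      have : θ * x / (1 - θ * x) ≤ 0 := div_nonpos_of_nonpos_of_nonneg (by nlinarith) (by nlinarith)
      simpa using this
    · exact (integrable_PsiT_integrand hν hθ.le).neg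
  rw [integral_neg] at hpos
  exact neg_pos.mp hpos

lemma tendsto_PsiT_atBot [IsFiniteMeasure ν] (hν : ∀ᵐ x ∂ν, 0 ≤ x) :
    Tendsto (PsiT ν) atBot (𝓝 (-ν.real (Ioi 0))) := by
  have hlim : ∫ x, (Ioi (0:ℝ)).indicator (fun _ => (-1:ℝ)) x ∂ν = -ν.real (Ioi 0) := by
    simp [integral_indicator_const _ measurableSet_Ioi]
  rw [← hlim]
  refine tendsto_integral_filter_of_dominated_convergence (fun _ => 1)
    (Eventually.of_forall aestronglyMeasurable_PsiT_integrand) ?_ (integrable_const 1) ?_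
  · filter_upwards [eventually_le_atBot 0] with θ hθ
    exact hν.mono fun _ hx => abs_mul_div_one_sub_mul_le_one hθ hx
  filter_upwards [hν] with x hx
  rcases hx.eq_or_lt with rfl | hx
  · simp
  rw [indicator_of_mem (mem_Ioi.mpr hx)]
  have hden : Tendsto (fun θ : ℝ => 1 - θ * x) atBot atTop :=
    tendsto_atTop_add_const_left _ 1
      (tendsto_neg_atBot_atTop.comp (tendsto_id.atBot_mul_const hx))
  refine ((hden.inv_tendsto_atTop).sub_const 1 |>.congr' ?_).trans (by norm_num)
  filter_upwards [eventually_le_atBot 0] with θ hθ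
  have : 1 - θ * x ≠ 0 := by nlinarith
  simp only [Pi.inv_apply]
  field_simp
  ring

lemma exists_PsiT_eq [IsFiniteMeasure ν] (hν : ∀ᵐ x ∂ν, 0 ≤ x) {z : ℝ}
    (hz : z ∈ Ioo (-ν.real (Ioi 0)) 0) : ∃ θ < 0, PsiT ν θ = z := by
  obtain ⟨a, hPsi, ha⟩ :=
    (((tendsto_PsiT_atBot hν).eventually (gt_mem_nhds hz.1)).and (eventually_lt_atBot 0)).exists
  obtain ⟨θ, hθ, rfl⟩ := intermediate_value_Icc ha.le
    ((continuousOn_PsiT hν).mono Icc_subset_Iic_self) ⟨hPsi.le, by simpa using hz.2.le⟩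
  exact ⟨θ, hθ.2.lt_of_ne (by rintro rfl; simp at hz), rfl⟩

lemma χT_neg_and_PsiT_χT [IsFiniteMeasure ν] (hν : ∀ᵐ x ∂ν, 0 ≤ x) {z : ℝ}
    (hz : z ∈ Ioo (-ν.real (Ioi 0)) 0) : χT ν z < 0 ∧ PsiT ν (χT ν z) = z := by
  obtain ⟨θ, hθ, hθz⟩ := exists_PsiT_eq hν hz
  have hθ' : ∃ θ ∈ Iio 0, PsiT ν θ = z := ⟨θ, hθ, hθz⟩
  exact ⟨Function.invFunOn_mem hθ', Function.invFunOn_eq hθ'⟩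

lemma tendsto_χT_zero [IsFiniteMeasure ν] (hν : ∀ᵐ x ∂ν, 0 ≤ x) (hν₀ : ν (Ioi 0) ≠ 0) :
    Tendsto (χT ν) (𝓝[Ioo (-ν.real (Ioi 0)) 0] 0) (𝓝 0) := by
  rw [Metric.tendsto_nhds]
  intro ε hε
  have hPsiε : PsiT ν (-ε) < 0 := PsiT_neg hν hν₀ (neg_lt_zero.mpr hε)
  filter_upwards [nhdsWithin_le_nhds (Ioi_mem_nhds hPsiε), self_mem_nhdsWithin] with z hzε hz
  obtain ⟨hneg, hinv⟩ := χT_neg_and_PsiT_χT hν hz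
  have hgt : -ε < χT ν z := by
    by_contra! h
    have := monotoneOn_PsiT hν (mem_Iic.mpr hneg.le) (mem_Iic.mpr (by linarith)) h
    exact (hinv ▸ this).not_gt hzε
  rw [Real.dist_eq, sub_zero, abs_lt]
  constructor <;> linarith

lemma measureReal_Ioi_zero [IsProbabilityMeasure ν] (hpos : ν (Iio 0) = 0) :
    ν.real (Ioi 0) = 1 - ν.real {0} := by
  have hIic : ν.real (Iic 0) = ν.real {0} := by
    rw [← Iio_union_right, measureReal_union (by simp) (measurableSet_singleton 0),
      measureReal_def, hpos, ENNReal.toReal_zero, zero_add]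
  rw [← compl_Iic, measureReal_compl measurableSet_Iic, hIic, probReal_univ]

end PsiT

theorem zS_tendsto_zero_general (ν : Measure ℝ) [IsProbabilityMeasure ν]
    (hpos : ν (Iio 0) = 0) (hatom : ν {0} < 1) :
    Tendsto (fun z => z * Stransf ν z)
      (𝓝[Ioo ((ν {0}).toReal - 1) 0] 0) (𝓝 0) := by
  have hν : ∀ᵐ x ∂ν, 0 ≤ x :=
    (measure_eq_zero_iff_ae_notMem.mp hpos).mono fun x hx => not_lt.mp hx
  have hδ : (ν {0}).toReal < 1 := by
    simpa using (ENNReal.toReal_lt_toReal (measure_ne_top ν _) ENNReal.one_ne_top).mpr hatom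
  have hν₀ : ν (Ioi 0) ≠ 0 := by
    intro h
    have := measureReal_Ioi_zero hpos
    simp only [measureReal_def, h, ENNReal.toReal_zero] at this
    linarith
  have hχ := tendsto_χT_zero hν hν₀
  rw [measureReal_Ioi_zero hpos, neg_sub, measureReal_def] at hχ
  have h1z : Tendsto (fun z : ℝ => 1 + z) (𝓝[Ioo ((ν {0}).toReal - 1) 0] 0) (𝓝 1) :=
    ((continuous_const.add continuous_id).tendsto' 0 1 (by simp)).mono_left nhdsWithin_le_nhds
  refine (by simpa using hχ.mul h1z : Tendsto (fun z => χT ν z * (1 + z)) _ (𝓝 0)).congr' ?_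
  filter_upwards [self_mem_nhdsWithin] with z hz
  rw [Stransf, mul_div_cancel₀ _ hz.2.ne]

/-- `z S_ν(z) → 0` as `z → 0⁻` along `(δ-1, 0)`. -/
theorem zS_tendsto_zero (ν : Measure ℝ) [IsProbabilityMeasure ν]
    (hnd : Nondeg ν) (hpos : ν (Iio 0) = 0) (hatom : ν {0} < 1) :
    Tendsto (fun z => z * Stransf ν z)
      (𝓝[Ioo ((ν {0}).toReal - 1) 0] 0) (𝓝 0) :=
  zS_tendsto_zero_general ν hpos hatom
end
end
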